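/- Let F : ℝ → ℝ be an increasing homeomorphism with F(x+1) = F(x) + 2 for all x, F(0) = 0, which is uniformly symmetric (degree d = 2). For w ∈ Σ* and i ≥ 0 let a_i(w) ∈ Σ* be the sequence consisting of i entries equal to 1, then an entry 0, then the entries of w, and let b_i(w) be the sequence consisting of i entries equal to 0, then an entry 1, then the entries of w. Then the infinite product ∏_{i=0}^{∞} D*(F)(a_i(w))/D*(F)(b_i(w)) converges for every w ∈ Σ*, the convergence of the partial products is uniform in w, and its value is a constant independent of w. -/

import Mathlib

/-
The partial product `∏_{i ≤ N} D*(a_i w) / D*(b_i w)` telescopes: it is the limit, as `m → ∞`, of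
the ratio of the two cells `F^{-(N+m+1)} [j, j + 1]` and `F^{-(N+m+1)} [j - 1, j]` meeting at the
grid point `j = (2k + 1) 2^N`, `k = k_m(w)`. These are the images under `F^{-(m+1)}` of the two
level-`N` cells `[0, F⁻ᴺ(1)]` and `[F⁻ᴺ(-1), 0]` translated by `2k + 1`. Uniform symmetry, applied
along dyadic subdivisions, makes every `F⁻ᴹ` almost affine on short intervals, uniformly in `M`;
since the level-`N` cells at `0` shrink geometrically, the ratio is uniformly close to the ratio
`α_N` of these two cells. The same estimate with translation `0` shows that `α_N` is Cauchy, and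
its limit is the constant.
-/

open Filter

/-- `Finv F n` is the inverse of the `n`-th iterate `F^[n]`. -/
noncomputable def Finv (F : ℝ → ℝ) (n : ℕ) : ℝ → ℝ := Function.invFun (F^[n])

/-- Uniform symmetry of a lifted circle endomorphism. -/
def UnifSymm (F : ℝ → ℝ) : Prop :=
  ∃ ε : ℝ → ℝ, (∀ t : ℝ, 0 < t → 0 < ε t) ∧ (∃ B : ℝ, ∀ t : ℝ, 0 < t → ε t ≤ B) ∧
    Tendsto ε (nhdsWithin 0 (Set.Ioi 0)) (nhds 0) ∧
    ∀ x t : ℝ, 0 < t → ∀ n : ℕ, 1 ≤ n →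
      1 / (1 + ε t) ≤ (Finv F n (x + t) - Finv F n x) / (Finv F n x - Finv F n (x - t)) ∧
      (Finv F n (x + t) - Finv F n x) / (Finv F n x - Finv F n (x - t)) ≤ 1 + ε t

/-- `kseq d w n = Σ_{q<n} w(q) d^q`. -/
def kseq (d : ℕ) (w : ℕ → Fin d) (n : ℕ) : ℕ :=
  ∑ q ∈ Finset.range n, (w q : ℕ) * d ^ q

/-- The shift `σ*` on the dual symbolic space. -/
def shft {d : ℕ} (w : ℕ → Fin d) : ℕ → Fin d := fun q => w (q + 1)

/-- The `n`-th approximant `D*_n(F)(w)` of the dual derivative. -/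
noncomputable def DstarSeq (F : ℝ → ℝ) {d : ℕ} (w : ℕ → Fin d) (n : ℕ) : ℝ :=
  (Finv F (n - 1) ((kseq d (shft w) (n - 1) : ℝ) + 1) -
      Finv F (n - 1) (kseq d (shft w) (n - 1) : ℝ)) /
  (Finv F n ((kseq d w n : ℝ) + 1) - Finv F n (kseq d w n : ℝ))

/-- `a_i(w)`: `i` ones, then a zero, then the entries of `w`. -/
def aseq (i : ℕ) (w : ℕ → Fin 2) : ℕ → Fin 2 :=
  fun q => if q < i then 1 else if q = i then 0 else w (q - i - 1)

/-- `b_i(w)`: `i` zeros, then a one, then the entries of `w`. -/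
def bseq (i : ℕ) (w : ℕ → Fin 2) : ℕ → Fin 2 :=
  fun q => if q < i then 0 else if q = i then 1 else w (q - i - 1)

open Topology

def IsQuasiSymm (g : ℝ → ℝ) (κ r : ℝ) : Prop :=
  ∀ x t, 0 < t → t ≤ r →
    g (x + t) - g x ≤ κ * (g x - g (x - t)) ∧ g x - g (x - t) ≤ κ * (g (x + t) - g x)

theorem le_div_one_add_mul_add {a b κ : ℝ} (hκ : 0 ≤ κ) (h : a ≤ κ * b) :
    a ≤ κ / (1 + κ) * (a + b) := by
  rw [div_mul_eq_mul_div, le_div_iff₀ (by linarith)]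
  linarith

namespace IsQuasiSymm

variable {g : ℝ → ℝ} {κ r : ℝ}

theorem mono_scale (hg : IsQuasiSymm g κ r) {r' : ℝ} (hr : r' ≤ r) : IsQuasiSymm g κ r' :=
  fun x t ht htr => hg x t ht (htr.trans hr)

theorem comp_affine (hg : IsQuasiSymm g κ r) (y : ℝ) {S : ℝ} (hS : 0 < S) :
    IsQuasiSymm (fun s => g (y + s * S)) κ (r / S) := by
  intro x t ht htr
  have e₁ : y + (x + t) * S = y + x * S + t * S := by ring
  have e₂ : y + (x - t) * S = y + x * S - t * S := by ring
  simp only [e₁, e₂]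
  exact hg _ _ (by positivity) ((le_div_iff₀ hS).1 htr)

theorem comp_neg_sub (hg : IsQuasiSymm g κ r) (c : ℝ) :
    IsQuasiSymm (fun s => -g (c - s)) κ r := by
  intro x t ht htr
  obtain ⟨h₁, h₂⟩ := hg (c - x) t ht htr
  have e₁ : c - (x + t) = c - x - t := by ring
  have e₂ : c - (x - t) = c - x + t := by ring
  simp only [e₁, e₂]
  constructor <;> linarith

variable {h : ℝ → ℝ}

theorem dyadic_increment_le (hh : Monotone h) (hκ : 1 ≤ κ) (hq : IsQuasiSymm h κ (1 / 2)) (l : ℕ) :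
    ∀ i : ℕ, i < 2 ^ l → h ((i + 1) / 2 ^ l) - h (i / 2 ^ l) ≤ (κ / 2) ^ l * (h 1 - h 0) := by
  induction l with
  | zero =>
    intro i hi
    obtain rfl : i = 0 := by omega
    simp
  | succ l ih =>
    intro i hi
    obtain ⟨j, hij⟩ := Nat.even_or_odd' i
    set x : ℝ := (2 * j + 1) / 2 ^ (l + 1)
    set t : ℝ := 1 / 2 ^ (l + 1)
    have hxl : x - t = j / 2 ^ l := by simp only [x, t]; field_simp; ring
    have hxr : x + t = (j + 1) / 2 ^ l := by simp only [x, t]; field_simp; ring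
    have ht : 0 < t := by positivity
    have hparent := ih j (by omega)
    have hleft : 0 ≤ h x - h (x - t) := sub_nonneg.2 (hh (by linarith))
    have hright : 0 ≤ h (x + t) - h x := sub_nonneg.2 (hh (by linarith))
    obtain ⟨hr, hl⟩ := hq x t ht (by
      simp only [t]; gcongr; exact le_self_pow₀ (by norm_num) (by omega))
    have hchild : ∀ a b : ℝ, 0 ≤ a → 0 ≤ b → a ≤ κ * b →
        a + b = h ((j + 1) / 2 ^ l) - h (j / 2 ^ l) → a ≤ (κ / 2) ^ (l + 1) * (h 1 - h 0) := by
      intro a b ha hb hab hsum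
      have hκ' : κ / (1 + κ) ≤ κ / 2 :=
        div_le_div_of_nonneg_left (by linarith) two_pos (by linarith)
      calc a ≤ κ / (1 + κ) * (a + b) := le_div_one_add_mul_add (by linarith) hab
        _ ≤ κ / 2 * (a + b) := mul_le_mul_of_nonneg_right hκ' (by linarith)
        _ ≤ κ / 2 * ((κ / 2) ^ l * (h 1 - h 0)) := by rw [hsum]; gcongr
        _ = (κ / 2) ^ (l + 1) * (h 1 - h 0) := by ring
    rcases hij with rfl | rfl
    · have e₁ : ((2 * j : ℕ) + 1 : ℝ) / 2 ^ (l + 1) = x := by simp only [x]; push_cast; ring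
      have e₂ : ((2 * j : ℕ) : ℝ) / 2 ^ (l + 1) = x - t := by simp only [x, t]; push_cast; ring
      rw [e₁, e₂]
      refine hchild _ _ hleft hright hl ?_
      rw [← hxl, ← hxr]; ring
    · have e₁ : ((2 * j + 1 : ℕ) + 1 : ℝ) / 2 ^ (l + 1) = x + t := by
        simp only [x, t]; push_cast; ring
      have e₂ : ((2 * j + 1 : ℕ) : ℝ) / 2 ^ (l + 1) = x := by simp only [x]; push_cast; ring
      rw [e₁, e₂]
      refine hchild _ _ hright hleft hr ?_
      rw [← hxl, ← hxr]; ring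

theorem dyadic_sub_le (hh : Monotone h) (hκ : 1 ≤ κ) (hq : IsQuasiSymm h κ (1 / 2)) {L i : ℕ}
    (hi : i ≤ 2 ^ L) : h (i / 2 ^ L) - h 0 ≤ i * ((κ / 2) ^ L * (h 1 - h 0)) := by
  have htel := Finset.sum_range_sub (fun k : ℕ => h (k / 2 ^ L)) i
  simp only [Nat.cast_add, Nat.cast_one, Nat.cast_zero, zero_div] at htel
  rw [← htel]
  calc ∑ k ∈ Finset.range i, (h ((k + 1) / 2 ^ L) - h (k / 2 ^ L))
      ≤ ∑ _k ∈ Finset.range i, (κ / 2) ^ L * (h 1 - h 0) :=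
        Finset.sum_le_sum fun k hk => hq.dyadic_increment_le hh hκ L k (by simp at hk; omega)
    _ = i * ((κ / 2) ^ L * (h 1 - h 0)) := by simp

theorem sub_le_affine (hh : Monotone h) (hκ : 1 ≤ κ) (hq : IsQuasiSymm h κ (1 / 2)) (L : ℕ)
    {θ : ℝ} (hθ₀ : 0 ≤ θ) (hθ₁ : θ ≤ 1) :
    h θ - h 0 ≤ θ * (h 1 - h 0) + (κ ^ L - 1 + (κ / 2) ^ L) * (h 1 - h 0) := by
  have hD : 0 ≤ h 1 - h 0 := sub_nonneg.2 (hh zero_le_one)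
  have h2L : (0 : ℝ) < 2 ^ L := by positivity
  set j := ⌈θ * 2 ^ L⌉₊
  have hj : (j : ℝ) < θ * 2 ^ L + 1 := Nat.ceil_lt_add_one (by positivity)
  have hjL : j ≤ 2 ^ L := Nat.ceil_le.2 (by push_cast; nlinarith)
  have hθj : θ ≤ j / 2 ^ L := by rw [le_div_iff₀ h2L]; exact Nat.le_ceil _
  have hκL : 1 ≤ κ ^ L := one_le_pow₀ hκ
  calc h θ - h 0 ≤ h (j / 2 ^ L) - h 0 := by linarith [hh hθj]
    _ ≤ j * ((κ / 2) ^ L * (h 1 - h 0)) := hq.dyadic_sub_le hh hκ hjL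
    _ ≤ (θ * 2 ^ L + 1) * ((κ / 2) ^ L * (h 1 - h 0)) := by gcongr
    _ = θ * κ ^ L * (h 1 - h 0) + (κ / 2) ^ L * (h 1 - h 0) := by
        rw [div_pow]; field_simp
    _ ≤ θ * (h 1 - h 0) + (κ ^ L - 1 + (κ / 2) ^ L) * (h 1 - h 0) := by
        nlinarith [mul_nonneg (mul_nonneg (sub_nonneg.2 hθ₁) (sub_nonneg.2 hκL)) hD]

theorem abs_sub_affine_le (hh : Monotone h) (hκ : 1 ≤ κ) (hq : IsQuasiSymm h κ (1 / 2)) (L : ℕ)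
    {θ : ℝ} (hθ₀ : 0 ≤ θ) (hθ₁ : θ ≤ 1) :
    |h θ - h 0 - θ * (h 1 - h 0)| ≤ (κ ^ L - 1 + (κ / 2) ^ L) * (h 1 - h 0) := by
  have hup := hq.sub_le_affine hh hκ L hθ₀ hθ₁
  -- the lower bound is the upper bound for the point reflection `s ↦ -h (1 - s)`
  have hlow := (hq.comp_neg_sub 1).sub_le_affine (fun a b hab => neg_le_neg (hh (by linarith)))
    hκ L (sub_nonneg.2 hθ₁) (by linarith)
  simp only [sub_zero, sub_sub_cancel, sub_self] at hlow
  rw [abs_le]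
  constructor <;> linarith

end IsQuasiSymm

theorem exists_isQuasiSymm_abs_sub_affine_le {e : ℝ} (he : 0 < e) :
    ∃ κ > 1, ∀ g : ℝ → ℝ, Monotone g → ∀ {y S r : ℝ}, 0 < S → S ≤ 2 * r →
      IsQuasiSymm g κ r → ∀ θ, 0 ≤ θ → θ ≤ 1 →
        |g (y + θ * S) - g y - θ * (g (y + S) - g y)| ≤ e * (g (y + S) - g y) := by
  obtain ⟨L, hL⟩ := exists_pow_lt_of_lt_one he (by norm_num : (1 / 2 : ℝ) < 1)
  have hcont : ContinuousAt (fun κ : ℝ => κ ^ L - 1 + (κ / 2) ^ L) 1 := by fun_prop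
  have hnear : ∀ᶠ κ in 𝓝[>] 1, κ ^ L - 1 + (κ / 2) ^ L < e :=
    nhdsWithin_le_nhds (hcont.eventually_lt continuousAt_const (by simpa using hL))
  obtain ⟨κ, hκe, hκ⟩ := (hnear.and self_mem_nhdsWithin).exists
  refine ⟨κ, hκ, fun g hg y S r hS hSr hq θ hθ₀ hθ₁ => ?_⟩
  have hh : Monotone fun s => g (y + s * S) := fun a b hab => hg (by nlinarith)
  have hqh := (hq.comp_affine y hS).mono_scale (show 1 / 2 ≤ r / S by rw [le_div_iff₀ hS]; linarith)
  have := hqh.abs_sub_affine_le hh hκ.le L hθ₀ hθ₁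
  simp only [zero_mul, add_zero, one_mul] at this
  exact this.trans (mul_le_mul_of_nonneg_right hκe.le (sub_nonneg.2 (hg (by linarith))))

theorem abs_div_sub_le_of_abs_sub_le {A C θ τ e : ℝ} (hτ : 0 < τ) (hτθ : τ ≤ θ) (he : e ≤ τ / 2)
    (hS : 0 < A + C) (hC : |C - θ * (A + C)| ≤ e * (A + C)) :
    |A / C - (1 - θ) / θ| ≤ 2 * e / τ ^ 2 := by
  have hθ : 0 < θ := hτ.trans_le hτθ
  obtain ⟨hC₁, -⟩ := abs_le.1 hC
  have hCθ : θ * (A + C) / 2 ≤ C := by nlinarith [mul_le_mul_of_nonneg_right he hS.le]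
  have hC₀ : 0 < C := lt_of_lt_of_le (by positivity) hCθ
  have hid : A / C - (1 - θ) / θ = -(C - θ * (A + C)) / (θ * C) := by field_simp; ring
  rw [hid, abs_div, abs_neg, abs_of_pos (mul_pos hθ hC₀),
    div_le_div_iff₀ (mul_pos hθ hC₀) (by positivity)]
  calc |C - θ * (A + C)| * τ ^ 2 ≤ e * (A + C) * τ ^ 2 := by gcongr
    _ ≤ 2 * e * (θ * C) := by
        have he₀ : 0 ≤ e := nonneg_of_mul_nonneg_left ((abs_nonneg _).trans hC) hS
        have h₁ : τ ^ 2 * (A + C) ≤ θ ^ 2 * (A + C) := by gcongr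
        have h₂ : θ ^ 2 * (A + C) ≤ 2 * θ * C := by
          nlinarith [mul_le_mul_of_nonneg_left hCθ hθ.le]
        nlinarith [mul_le_mul_of_nonneg_left (h₁.trans h₂) he₀]

theorem exists_isQuasiSymm_abs_div_sub_le {κ₁ δ : ℝ} (hκ₁ : 0 ≤ κ₁) (hδ : 0 < δ) :
    ∃ κ > 1, ∀ g : ℝ → ℝ, StrictMono g → ∀ {x u v r : ℝ}, 0 < u → 0 < v → v ≤ κ₁ * u →
      u + v ≤ 2 * r → IsQuasiSymm g κ r →
        |(g (x + v) - g x) / (g x - g (x - u)) - v / u| ≤ δ := by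
  set τ : ℝ := 1 / (1 + κ₁)
  have hτ : 0 < τ := by positivity
  set e : ℝ := min (τ / 2) (δ * τ ^ 2 / 2)
  obtain ⟨κ, hκ, haffine⟩ := exists_isQuasiSymm_abs_sub_affine_le (e := e) (by positivity)
  refine ⟨κ, hκ, fun g hg x u v r hu hv hvu huv hq => ?_⟩
  have hθ := haffine g hg.monotone (y := x - u) (by linarith) huv hq (u / (u + v)) (by positivity)
    (by rw [div_le_one (by linarith)]; linarith)
  have e₁ : x - u + u / (u + v) * (u + v) = x := by field_simp; ring
  have e₂ : x - u + (u + v) = x + v := by ring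
  rw [e₁, e₂, show g (x + v) - g (x - u) = (g (x + v) - g x) + (g x - g (x - u)) by ring] at hθ
  have hτθ : τ ≤ u / (u + v) := by
    rw [div_le_div_iff₀ (by linarith) (by linarith)]; linarith
  have key := abs_div_sub_le_of_abs_sub_le hτ hτθ (min_le_left _ _)
    (by linarith [hg (show x - u < x + v by linarith)]) hθ
  have e₃ : (1 - u / (u + v)) / (u / (u + v)) = v / u := by field_simp; ring
  rw [e₃] at key
  refine key.trans ?_
  rw [div_le_iff₀ (by positivity)]
  linarith [min_le_right (τ / 2) (δ * τ ^ 2 / 2)]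

theorem tendsto_zero_of_le_mul {x : ℕ → ℝ} {c : ℝ} (hx : ∀ n, 0 ≤ x n) (hc₀ : 0 ≤ c) (hc₁ : c < 1)
    (h : ∀ n, x (n + 1) ≤ c * x n) : Tendsto x atTop (𝓝 0) := by
  refine squeeze_zero hx (fun n => le_geom hc₀ n fun k _ => h k) ?_
  simpa using (tendsto_pow_atTop_nhds_zero_of_lt_one hc₀ hc₁).mul_const (x 0)

theorem kseq_succ (d : ℕ) (v : ℕ → Fin d) (n : ℕ) :
    kseq d v (n + 1) = v 0 + d * kseq d (shft v) n := by
  simp only [kseq, shft, Finset.sum_range_succ', Finset.mul_sum, pow_succ]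
  rw [add_comm]
  congr 1
  · simp
  · exact Finset.sum_congr rfl fun q _ => by ring

theorem shft_aseq_zero (w : ℕ → Fin 2) : shft (aseq 0 w) = w := by
  funext q; simp [shft, aseq]

theorem shft_aseq_succ (i : ℕ) (w : ℕ → Fin 2) : shft (aseq (i + 1) w) = aseq i w := by
  funext q
  simp only [shft, aseq]
  split_ifs <;> first | rfl | omega | congr 1; omega

theorem shft_bseq_zero (w : ℕ → Fin 2) : shft (bseq 0 w) = w := by
  funext q; simp [shft, bseq]

theorem shft_bseq_succ (i : ℕ) (w : ℕ → Fin 2) : shft (bseq (i + 1) w) = bseq i w := by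
  funext q
  simp only [shft, bseq]
  split_ifs <;> first | rfl | omega | congr 1; omega

theorem kseq_aseq (N m : ℕ) (w : ℕ → Fin 2) :
    (kseq 2 (aseq N w) (N + m + 1) : ℤ) = (2 * kseq 2 w m + 1) * 2 ^ N - 1 := by
  induction N with
  | zero => simp [kseq_succ, shft_aseq_zero, aseq]
  | succ N ih =>
    rw [kseq_succ, shft_aseq_succ, Nat.add_right_comm N 1 m]
    push_cast
    rw [ih]
    simp [aseq]
    ring

theorem kseq_bseq (N m : ℕ) (w : ℕ → Fin 2) :
    (kseq 2 (bseq N w) (N + m + 1) : ℤ) = (2 * kseq 2 w m + 1) * 2 ^ N := by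
  induction N with
  | zero => simp [kseq_succ, shft_bseq_zero, bseq]; ring
  | succ N ih =>
    rw [kseq_succ, shft_bseq_succ, Nat.add_right_comm N 1 m]
    push_cast
    rw [ih]
    simp [bseq]
    ring

structure IsDegTwoLift (F : ℝ → ℝ) : Prop where
  strictMono : StrictMono F
  bijective : Function.Bijective F
  map_add_one : ∀ x, F (x + 1) = F x + 2
  map_zero : F 0 = 0

noncomputable def cellLen (F : ℝ → ℝ) (n : ℕ) (k : ℤ) : ℝ := Finv F n (k + 1) - Finv F n k

noncomputable def adjRatio (F : ℝ → ℝ) (n : ℕ) (k : ℤ) : ℝ := cellLen F n k / cellLen F n (k - 1)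

theorem dstarSeq_succ (F : ℝ → ℝ) {d : ℕ} (v : ℕ → Fin d) (n : ℕ) :
    DstarSeq F v (n + 1) =
      cellLen F n (kseq d (shft v) n) / cellLen F (n + 1) (kseq d v (n + 1)) := by
  simp [DstarSeq, cellLen]

theorem finv_zero_apply (F : ℝ → ℝ) (y : ℝ) : Finv F 0 y = y :=
  Function.invFun_eq (f := id) ⟨y, rfl⟩

namespace IsDegTwoLift

variable {F : ℝ → ℝ}

theorem map_add_int (hF : IsDegTwoLift F) (x : ℝ) (j : ℤ) : F (x + j) = F x + 2 * j := by
  induction j using Int.induction_on with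
  | zero => simp
  | succ j ih =>
    push_cast at ih ⊢
    rw [← add_assoc, hF.map_add_one, ih]; ring
  | pred j ih =>
    have := hF.map_add_one (x + (-j - 1 : ℤ))
    push_cast at this ih ⊢
    rw [show x + (-j - 1) + 1 = x + -j by ring, ih] at this
    linarith

theorem iterate_add_int (hF : IsDegTwoLift F) (n : ℕ) (x : ℝ) (j : ℤ) :
    F^[n] (x + j) = F^[n] x + j * 2 ^ n := by
  induction n generalizing x j with
  | zero => simp
  | succ n ih =>
    rw [Function.iterate_succ_apply', Function.iterate_succ_apply', ih,
      show (j : ℝ) * 2 ^ n = ((j * 2 ^ n : ℤ) : ℝ) by push_cast; ring, hF.map_add_int]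
    push_cast; ring

theorem iterate_finv (hF : IsDegTwoLift F) (n : ℕ) (y : ℝ) : F^[n] (Finv F n y) = y :=
  Function.rightInverse_invFun (hF.bijective.iterate n).2 y

theorem finv_eq_of_iterate_eq (hF : IsDegTwoLift F) {n : ℕ} {x y : ℝ} (h : F^[n] x = y) :
    Finv F n y = x := by
  rw [← h]; exact Function.leftInverse_invFun (hF.bijective.iterate n).1 x

theorem strictMono_finv (hF : IsDegTwoLift F) (n : ℕ) : StrictMono (Finv F n) := fun a b hab =>
  (hF.strictMono.iterate n).lt_iff_lt.1 (by rwa [hF.iterate_finv, hF.iterate_finv])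

theorem finv_apply_zero (hF : IsDegTwoLift F) (n : ℕ) : Finv F n 0 = 0 :=
  hF.finv_eq_of_iterate_eq (Function.iterate_fixed hF.map_zero n)

theorem finv_add_int_mul (hF : IsDegTwoLift F) (n : ℕ) (y : ℝ) (j : ℤ) :
    Finv F n (y + j * 2 ^ n) = Finv F n y + j :=
  hF.finv_eq_of_iterate_eq (by rw [hF.iterate_add_int, hF.iterate_finv])

theorem finv_add_apply (hF : IsDegTwoLift F) (m n : ℕ) (y : ℝ) :
    Finv F (m + n) y = Finv F n (Finv F m y) :=
  hF.finv_eq_of_iterate_eq (by rw [Function.iterate_add_apply, hF.iterate_finv, hF.iterate_finv])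

theorem cellLen_pos (hF : IsDegTwoLift F) (n : ℕ) (k : ℤ) : 0 < cellLen F n k :=
  sub_pos.2 (hF.strictMono_finv n (by linarith))

theorem finv_succ_two_mul (hF : IsDegTwoLift F) (n : ℕ) (k : ℤ) :
    Finv F (n + 1) (2 * k) = Finv F n k := by
  have h := hF.finv_add_int_mul 1 0 k
  rw [zero_add, hF.finv_apply_zero, zero_add, pow_one, mul_comm] at h
  rw [add_comm, hF.finv_add_apply, h]

theorem cellLen_two_mul_add_cellLen (hF : IsDegTwoLift F) (n : ℕ) (k : ℤ) :
    cellLen F (n + 1) (2 * k) + cellLen F (n + 1) (2 * k + 1) = cellLen F n k := by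
  have h := hF.finv_succ_two_mul n (k + 1)
  simp only [cellLen, Int.cast_add, Int.cast_mul, Int.cast_ofNat, Int.cast_one] at h ⊢
  rw [← hF.finv_succ_two_mul n k, ← h]
  ring_nf

theorem cellLen_add_mul_two_pow (hF : IsDegTwoLift F) (N M : ℕ) (j i : ℤ) :
    cellLen F (N + M) (j * 2 ^ N + i) =
      Finv F M (j + Finv F N (i + 1)) - Finv F M (j + Finv F N i) := by
  simp only [cellLen, hF.finv_add_apply, Int.cast_add, Int.cast_mul, Int.cast_pow,
    Int.cast_ofNat]
  rw [show (j : ℝ) * 2 ^ N + i + 1 = (i + 1) + j * 2 ^ N by ring,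
    show (j : ℝ) * 2 ^ N + i = i + j * 2 ^ N by ring,
    hF.finv_add_int_mul, hF.finv_add_int_mul, add_comm (Finv F N _), add_comm (Finv F N _)]

theorem isQuasiSymm_finv (hF : IsDegTwoLift F) {ε : ℝ → ℝ} (hε : ∀ t : ℝ, 0 < t → 0 < ε t)
    (hsym : ∀ x t : ℝ, 0 < t → ∀ n : ℕ, 1 ≤ n →
      1 / (1 + ε t) ≤ (Finv F n (x + t) - Finv F n x) / (Finv F n x - Finv F n (x - t)) ∧
      (Finv F n (x + t) - Finv F n x) / (Finv F n x - Finv F n (x - t)) ≤ 1 + ε t)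
    {κ r : ℝ} (hκ : 1 ≤ κ) (hεκ : ∀ t, 0 < t → t ≤ r → 1 + ε t ≤ κ) (n : ℕ) :
    IsQuasiSymm (Finv F n) κ r := by
  intro x t ht htr
  rcases Nat.eq_zero_or_pos n with rfl | hn
  · simp only [finv_zero_apply, add_sub_cancel_left, sub_sub_cancel]
    constructor <;> nlinarith
  have hA : 0 < Finv F n (x + t) - Finv F n x := sub_pos.2 (hF.strictMono_finv n (by linarith))
  have hC : 0 < Finv F n x - Finv F n (x - t) := sub_pos.2 (hF.strictMono_finv n (by linarith))
  have hεt := hε t ht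
  have hκt := hεκ t ht htr
  obtain ⟨h₁, h₂⟩ := hsym x t ht n hn
  rw [div_le_div_iff₀ (by linarith) hC] at h₁
  rw [div_le_iff₀ hC] at h₂
  constructor <;> nlinarith

theorem exists_isQuasiSymm_finv_one (hF : IsDegTwoLift F) (hs : UnifSymm F) :
    ∃ κ, 1 ≤ κ ∧ ∀ n, IsQuasiSymm (Finv F n) κ 1 := by
  obtain ⟨ε, hε, ⟨B, hB⟩, -, hsym⟩ := hs
  have hB₀ : 0 ≤ B := (hε 1 one_pos).le.trans (hB 1 one_pos)
  exact ⟨1 + B, by linarith, hF.isQuasiSymm_finv hε hsym (by linarith)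
    fun t ht _ => by linarith [hB t ht]⟩

theorem exists_isQuasiSymm_finv (hF : IsDegTwoLift F) (hs : UnifSymm F) {κ : ℝ} (hκ : 1 < κ) :
    ∃ r > 0, ∀ n, IsQuasiSymm (Finv F n) κ r := by
  obtain ⟨ε, hε, -, hlim, hsym⟩ := hs
  obtain ⟨r, hr, hsub⟩ := mem_nhdsGT_iff_exists_Ioc_subset.1
    (hlim.eventually (gt_mem_nhds (sub_pos.2 hκ)))
  exact ⟨r, hr, hF.isQuasiSymm_finv hε hsym hκ.le
    fun t ht htr => by linarith [show ε t < κ - 1 from hsub ⟨ht, htr⟩]⟩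

theorem cellLen_child_le (hF : IsDegTwoLift F) {n : ℕ} {κ : ℝ} (hκ : 0 ≤ κ)
    (hq : IsQuasiSymm (Finv F (n + 1)) κ 1) (k : ℤ) :
    cellLen F (n + 1) (2 * k) ≤ κ / (1 + κ) * cellLen F n k ∧
      cellLen F (n + 1) (2 * k + 1) ≤ κ / (1 + κ) * cellLen F n k := by
  obtain ⟨h₁, h₂⟩ := hq (2 * k + 1) 1 one_pos le_rfl
  have e₁ : cellLen F (n + 1) (2 * k + 1) =
      Finv F (n + 1) (2 * k + 1 + 1) - Finv F (n + 1) (2 * k + 1) := by simp [cellLen]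
  have e₂ : cellLen F (n + 1) (2 * k) =
      Finv F (n + 1) (2 * k + 1) - Finv F (n + 1) (2 * k + 1 - 1) := by simp [cellLen]
  rw [← hF.cellLen_two_mul_add_cellLen n k]
  rw [← e₁, ← e₂] at h₁ h₂
  exact ⟨le_div_one_add_mul_add hκ h₂,
    add_comm (cellLen F (n + 1) (2 * k)) _ ▸ le_div_one_add_mul_add hκ h₁⟩

theorem tendsto_cellLen_add (hF : IsDegTwoLift F) (hs : UnifSymm F) :
    Tendsto (fun n => cellLen F n 0 + cellLen F n (-1)) atTop (𝓝 0) := by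
  obtain ⟨κ, hκ, hq⟩ := hF.exists_isQuasiSymm_finv_one hs
  have hc₁ : κ / (1 + κ) < 1 := (div_lt_one (by linarith)).2 (by linarith)
  have hdecay (k : ℤ) (hk : k = 0 ∨ k = -1) :
      Tendsto (fun n => cellLen F n k) atTop (𝓝 0) := by
    refine tendsto_zero_of_le_mul (fun n => (hF.cellLen_pos n k).le) (by positivity) hc₁
      fun n => ?_
    obtain ⟨h₀, h₁⟩ := hF.cellLen_child_le (by linarith) (hq (n + 1)) k
    rcases hk with rfl | rfl
    · simpa using h₀
    · simpa using h₁
  simpa using (hdecay 0 (Or.inl rfl)).add (hdecay (-1) (Or.inr rfl))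

theorem adjRatio_mul_two_pow (hF : IsDegTwoLift F) (N M : ℕ) (j : ℤ) :
    adjRatio F (N + M) (j * 2 ^ N) =
      (Finv F M (j + cellLen F N 0) - Finv F M j) /
        (Finv F M j - Finv F M (j - cellLen F N (-1))) := by
  have h₀ := hF.cellLen_add_mul_two_pow N M j 0
  have h₁ := hF.cellLen_add_mul_two_pow N M j (-1)
  rw [add_zero] at h₀
  rw [adjRatio, sub_eq_add_neg, h₀, h₁]
  simp [cellLen, hF.finv_apply_zero]

theorem eventually_abs_adjRatio_sub_le (hF : IsDegTwoLift F) (hs : UnifSymm F) {δ : ℝ}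
    (hδ : 0 < δ) :
    ∀ᶠ N in atTop, ∀ (M : ℕ) (j : ℤ), |adjRatio F (N + M) (j * 2 ^ N) - adjRatio F N 0| ≤ δ := by
  obtain ⟨κ₁, hκ₁, hq₁⟩ := hF.exists_isQuasiSymm_finv_one hs
  obtain ⟨κ, hκ, hratio⟩ := exists_isQuasiSymm_abs_div_sub_le (by linarith) hδ
  obtain ⟨r, hr, hq⟩ := hF.exists_isQuasiSymm_finv hs hκ
  filter_upwards [(hF.tendsto_cellLen_add hs).eventually (gt_mem_nhds (by positivity : 0 < 2 * r))]
    with N hN M j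
  have hvu : cellLen F N 0 ≤ κ₁ * cellLen F N (-1) := by
    simpa [cellLen] using ((hq₁ N) 0 1 one_pos le_rfl).1
  rw [hF.adjRatio_mul_two_pow, adjRatio, zero_sub]
  exact hratio _ (hF.strictMono_finv M) (hF.cellLen_pos N _) (hF.cellLen_pos N _) hvu
    (by linarith) (hq M)

theorem exists_adjRatio_limit (hF : IsDegTwoLift F) (hs : UnifSymm F) :
    ∃ c, ∀ δ > 0, ∀ᶠ N in atTop, ∀ (M : ℕ) (j : ℤ), |adjRatio F (N + M) (j * 2 ^ N) - c| ≤ δ := by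
  have hcauchy : CauchySeq fun N => adjRatio F N 0 := by
    refine Metric.cauchySeq_iff'.2 fun δ hδ => ?_
    obtain ⟨N₀, hN₀⟩ := eventually_atTop.1 (hF.eventually_abs_adjRatio_sub_le hs (half_pos hδ))
    refine ⟨N₀, fun n hn => ?_⟩
    have h := hN₀ N₀ le_rfl (n - N₀) 0
    rw [zero_mul, Nat.add_sub_cancel' hn] at h
    rw [Real.dist_eq]
    linarith
  obtain ⟨c, hc⟩ := cauchySeq_tendsto_of_complete hcauchy
  refine ⟨c, fun δ hδ => ?_⟩
  filter_upwards [hF.eventually_abs_adjRatio_sub_le hs (half_pos hδ),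
    hc.eventually (Metric.closedBall_mem_nhds c (half_pos hδ))] with N hN hNc M j
  rw [Real.dist_eq] at hNc
  calc |adjRatio F (N + M) (j * 2 ^ N) - c|
      ≤ |adjRatio F (N + M) (j * 2 ^ N) - adjRatio F N 0| + |adjRatio F N 0 - c| :=
        abs_sub_le _ _ _
    _ ≤ δ := by linarith [hN M j]

theorem one_le_dstarSeq_succ (hF : IsDegTwoLift F) (v : ℕ → Fin 2) (n : ℕ) :
    1 ≤ DstarSeq F v (n + 1) := by
  rw [dstarSeq_succ, one_le_div (hF.cellLen_pos _ _), kseq_succ]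
  have hsum := hF.cellLen_two_mul_add_cellLen n (kseq 2 (shft v) n)
  have h₀ := hF.cellLen_pos (n + 1) (2 * kseq 2 (shft v) n)
  have h₁ := hF.cellLen_pos (n + 1) (2 * kseq 2 (shft v) n + 1)
  rcases Fin.exists_fin_two.1 ⟨v 0, rfl⟩ with h | h <;> rw [h]
  · simp only [Fin.val_zero, zero_add]; push_cast; linarith
  · simp only [Fin.val_one]; push_cast; rw [add_comm 1 (2 * _)]; linarith

theorem prod_dstarSeq (hF : IsDegTwoLift F) {d : ℕ} (s : ℕ → ℕ → Fin d)
    (hs : ∀ i, shft (s (i + 1)) = s i) (N m : ℕ) :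
    ∏ i ∈ Finset.range (N + 1), DstarSeq F (s i) (i + m + 1) =
      cellLen F m (kseq d (shft (s 0)) m) / cellLen F (N + m + 1) (kseq d (s N) (N + m + 1)) := by
  induction N with
  | zero => simp [dstarSeq_succ]
  | succ N ih =>
    rw [Finset.prod_range_succ, ih, dstarSeq_succ, hs, Nat.add_right_comm N 1 m]
    have := hF.cellLen_pos (N + m + 1) (kseq d (s N) (N + m + 1))
    field_simp

theorem prod_dstarSeq_div (hF : IsDegTwoLift F) (w : ℕ → Fin 2) (N m : ℕ) :
    ∏ i ∈ Finset.range (N + 1),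
        DstarSeq F (aseq i w) (i + m + 1) / DstarSeq F (bseq i w) (i + m + 1) =
      adjRatio F (N + (m + 1)) ((2 * kseq 2 w m + 1) * 2 ^ N) := by
  rw [Finset.prod_div_distrib, hF.prod_dstarSeq _ (shft_aseq_succ · w),
    hF.prod_dstarSeq _ (shft_bseq_succ · w), shft_aseq_zero, shft_bseq_zero, adjRatio,
    ← add_assoc, kseq_aseq, kseq_bseq]
  have := hF.cellLen_pos m (kseq 2 w m)
  field_simp

theorem tendsto_adjRatio_prod (hF : IsDegTwoLift F) {DF : (ℕ → Fin 2) → ℝ}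
    (hDF : ∀ w : ℕ → Fin 2, Tendsto (fun n => DstarSeq F w n) atTop (𝓝 (DF w)))
    (w : ℕ → Fin 2) (N : ℕ) :
    Tendsto (fun m => adjRatio F (N + (m + 1)) ((2 * kseq 2 w m + 1) * 2 ^ N)) atTop
      (𝓝 (∏ i ∈ Finset.range (N + 1), DF (aseq i w) / DF (bseq i w))) := by
  refine (tendsto_finsetProd _ fun i _ => ?_).congr fun m => hF.prod_dstarSeq_div w N m
  have hshift : Tendsto (fun m => i + m + 1) atTop atTop :=
    tendsto_atTop_mono (fun m => (by omega : m ≤ i + m + 1)) tendsto_id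
  have hb : 1 ≤ DF (bseq i w) := ge_of_tendsto ((hDF _).comp hshift)
    (Eventually.of_forall fun m => hF.one_le_dstarSeq_succ _ _)
  exact ((hDF _).comp hshift).div ((hDF _).comp hshift) (by linarith)

end IsDegTwoLift

/-- compatibility condition: the infinite product
`∏_{i=0}^∞ D*(F)(a_i(w))/D*(F)(b_i(w))` converges uniformly in `w` to a
constant independent of `w`. -/
theorem stmt_15 (F : ℝ → ℝ)
    (hmono : StrictMono F) (hbij : Function.Bijective F)
    (hdeg : ∀ x : ℝ, F (x + 1) = F x + 2) (hF0 : F 0 = 0)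
    (husym : UnifSymm F)
    (DF : (ℕ → Fin 2) → ℝ)
    (hDF : ∀ w : ℕ → Fin 2, Tendsto (fun n => DstarSeq F w n) atTop (nhds (DF w))) :
    ∃ c : ℝ,
      TendstoUniformly
        (fun (n : ℕ) (w : ℕ → Fin 2) =>
          ∏ i ∈ Finset.range n, DF (aseq i w) / DF (bseq i w))
        (fun _ => c) atTop := by
  have hF : IsDegTwoLift F := ⟨hmono, hbij, hdeg, hF0⟩
  obtain ⟨c, hc⟩ := hF.exists_adjRatio_limit husym
  refine ⟨c, Metric.tendstoUniformly_iff.2 fun δ hδ => ?_⟩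
  obtain ⟨N₀, hN₀⟩ := eventually_atTop.1 (hc (δ / 2) (half_pos hδ))
  refine eventually_atTop.2 ⟨N₀ + 1, fun n hn w => ?_⟩
  obtain ⟨N, rfl⟩ : ∃ N, n = N + 1 := ⟨n - 1, by omega⟩
  have hlim := ((hF.tendsto_adjRatio_prod hDF w N).sub_const c).abs
  have hclose := le_of_tendsto hlim (Eventually.of_forall fun m => hN₀ N (by omega) (m + 1) _)
  rw [dist_comm, Real.dist_eq]
  linarith
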